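/- arXiv:2507.11715 — 3 statements merged into one kernel-verified Lean document; each statement's English description precedes it below -/
import Mathlib

section
/- Let (M,Λ,E,𝓗) be a Jacobi-Haantjes manifold with Abelian Haantjes algebra 𝓗, and suppose H generates a Haantjes chain with potential functions Hᵢ satisfying dHᵢ = Kᵢᵀ dH. Then the Jacobi brackets satisfy {Hᵢ,Hⱼ} = Hᵢ·E(Hⱼ) − Hⱼ·E(Hᵢ). -/
/-- The Jacobi bracket `{f,g} = Λ(df,dg) + f·E(g) − g·E(f)`. -/
noncomputable def jacobiBracket {R : Type*} [CommRing R] [Algebra ℝ R]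
    (Λ : Ω[R⁄ℝ] →ₗ[R] Ω[R⁄ℝ] →ₗ[R] R) (E : Derivation ℝ R R) (f g : R) : R :=
  Λ (KaehlerDifferential.D ℝ R f) (KaehlerDifferential.D ℝ R g) + f * E g - g * E f

/-- let `(M,Λ,E,𝓗)` be a Jacobi-Haantjes manifold with an Abelian
Haantjes algebra `𝓗` of operators `Kᵢ` (acting here via their transposes `Kᵢᵀ` on
1-forms), compatible with `Λ` in the sense `Λ(Kᵢᵀα,β) = Λ(α,Kᵢᵀβ)`; if `H` generates
a Haantjes chain with potential functions `Hᵢ` satisfying `dHᵢ = Kᵢᵀ dH`, then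
`{Hᵢ,Hⱼ} = Hᵢ·E(Hⱼ) − Hⱼ·E(Hᵢ)`. -/
theorem jacobiHaantjes_chain_brackets {R : Type*} [CommRing R] [Algebra ℝ R] {ι : Type*}
    (Λ : Ω[R⁄ℝ] →ₗ[R] Ω[R⁄ℝ] →ₗ[R] R) (E : Derivation ℝ R R)
    (hskew : ∀ α β : Ω[R⁄ℝ], Λ α β = - Λ β α)
    (KT : ι → (Ω[R⁄ℝ] →ₗ[R] Ω[R⁄ℝ]))
    (hcompat : ∀ (i : ι) (α β : Ω[R⁄ℝ]), Λ (KT i α) β = Λ α (KT i β))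
    (hcomm : ∀ i j : ι, (KT i).comp (KT j) = (KT j).comp (KT i))
    (H : R) (Hf : ι → R)
    (hchain : ∀ i : ι, KaehlerDifferential.D ℝ R (Hf i) = KT i (KaehlerDifferential.D ℝ R H)) :
    ∀ i j : ι, jacobiBracket Λ E (Hf i) (Hf j) = Hf i * E (Hf j) - Hf j * E (Hf i) := by
  intro i j
  unfold jacobiBracket
  have key : Λ (KaehlerDifferential.D ℝ R (Hf i)) (KaehlerDifferential.D ℝ R (Hf j)) = 0 := by
    set d := KaehlerDifferential.D ℝ R H
    have h1 : Λ (KT i d) (KT j d) = Λ d (KT i (KT j d)) := hcompat i d (KT j d)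
    have h2 : Λ (KT j (KT i d)) d = Λ (KT i d) (KT j d) := by
      rw [hcompat j (KT i d) d, hcompat i d (KT j d)]
    have h3 : KT j (KT i d) = KT i (KT j d) := by
      have := congrArg (fun f => f d) (hcomm j i); simpa using this
    have h4 : Λ (KT i d) (KT j d) = - Λ (KT i d) (KT j d) := by
      calc Λ (KT i d) (KT j d) = Λ (KT j (KT i d)) d := h2.symm
        _ = - Λ d (KT j (KT i d)) := hskew _ _
        _ = - Λ d (KT i (KT j d)) := by rw [h3]
        _ = - Λ (KT i d) (KT j d) := by rw [h1]
    have h5 : (2:ℝ) • Λ (KT i d) (KT j d) = 0 := by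
      rw [two_smul]; linear_combination h4
    have h6 : Λ (KT i d) (KT j d) = 0 := by
      have := congrArg (fun x => (2:ℝ)⁻¹ • x) h5
      simpa [smul_smul] using this
    rw [hchain i, hchain j]; exact h6
  rw [key]; ring
end

section
/- Let (M,Ω,η) be a locally conformal symplectic manifold and K a (1,1)-tensor with Ω(KX,Y) = Ω(X,KY) for all vector fields X,Y, and suppose dH_K = Kᵀ dH for some smooth functions H, H_K. If η(KE) = 0 where E = ♯η, then η(K X_H) = η(X_{H_K}). -/
/-- let `(M,Ω,η)` be a locally conformal symplectic manifold (modeled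
pointwise: `Ω` a skew-symmetric 2-form on vector fields, `η` a 1-form), `K` a
(1,1)-tensor with `Ω(KX,Y) = Ω(X,KY)` for all vector fields, and suppose
`dH_K = Kᵀ dH` (i.e. `X(H_K) = (KX)(H)` for all `X`) for smooth functions `H, H_K`.
Hamiltonian fields satisfy `ι_{X_f}Ω = df − f·η` and `E = ♯η` satisfies `ι_E Ω = η`.
If `η(KE) = 0`, then `η(K X_H) = η(X_{H_K})`. -/
theorem lcs_eta_K_hamiltonian {A : Type*} [CommRing A] [Algebra ℝ A]
    (Ω : Derivation ℝ A A →ₗ[A] Derivation ℝ A A →ₗ[A] A)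
    (hskew : ∀ X Y : Derivation ℝ A A, Ω X Y = - Ω Y X)
    (η : Derivation ℝ A A →ₗ[A] A)
    (K : Derivation ℝ A A →ₗ[A] Derivation ℝ A A)
    (hKcompat : ∀ X Y : Derivation ℝ A A, Ω (K X) Y = Ω X (K Y))
    (E : Derivation ℝ A A) (hE : ∀ Y : Derivation ℝ A A, Ω E Y = η Y)
    (H HK : A) (XH XHK : Derivation ℝ A A)
    (hXH : ∀ Y : Derivation ℝ A A, Ω XH Y = Y H - H * η Y)
    (hXHK : ∀ Y : Derivation ℝ A A, Ω XHK Y = Y HK - HK * η Y)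
    (hchain : ∀ X : Derivation ℝ A A, X HK = (K X) H)
    (hKE : η (K E) = 0) :
    η (K XH) = η XHK := by
  have hηE : η E = 0 := by
    have h := hskew E E
    rw [hE E] at h
    have h2 : (2 : ℝ) • η E = 0 := by rw [two_smul]; linear_combination h
    have := congrArg (fun x => ((2:ℝ))⁻¹ • x) h2
    simpa [smul_smul] using this
  have h1 : η (K XH) = -(E HK) := by
    rw [← hE (K XH), ← hKcompat, hskew, hXH, ← hchain, hKE]; ring
  have h2 : η XHK = -(E HK) := by
    rw [← hE XHK, hskew, hXHK, hηE]; ring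
  rw [h1, h2]
end

section
/- Let (M,Λ,E,𝓗) be a locally conformal symplectic-Haantjes manifold with commuting compatible operators Kᵢ satisfying η(KᵢE)=0, and let H generate a Haantjes chain dHᵢ = Kᵢᵀ dH. Then {Hᵢ,Hⱼ} = Hⱼ·η(X_{Hᵢ}) − Hᵢ·η(X_{Hⱼ}). -/
/-- let `(M,Ω,η,𝓗)` be a locally conformal symplectic-Haantjes manifold
with commuting compatible operators `Kᵢ` (`Ω(KᵢX,Y) = Ω(X,KᵢY)`, `KᵢKⱼ = KⱼKᵢ`)
satisfying `η(KᵢE) = 0` where `ι_E Ω = η`, and let `H` generate a Haantjes chain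
`dHᵢ = Kᵢᵀ dH` (i.e. `X(Hᵢ) = (KᵢX)(H)` for all vector fields `X`).  Hamiltonian
fields `X_f = ham f` satisfy `ι_{X_f}Ω = df − f·η`, and the Jacobi bracket is
`{f,g} = df(X_g) − f·η(X_g)`.  Then `{Hᵢ,Hⱼ} = Hⱼ·η(X_{Hᵢ}) − Hᵢ·η(X_{Hⱼ})`. -/
theorem lcsHaantjes_chain_brackets {A : Type*} [CommRing A] [Algebra ℝ A] {ι : Type*}
    (Ω : Derivation ℝ A A →ₗ[A] Derivation ℝ A A →ₗ[A] A)
    (hskew : ∀ X Y : Derivation ℝ A A, Ω X Y = - Ω Y X)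
    (η : Derivation ℝ A A →ₗ[A] A)
    (E : Derivation ℝ A A) (hE : ∀ Y : Derivation ℝ A A, Ω E Y = η Y)
    (ham : A → Derivation ℝ A A)
    (hham : ∀ (f : A) (Y : Derivation ℝ A A), Ω (ham f) Y = Y f - f * η Y)
    (K : ι → (Derivation ℝ A A →ₗ[A] Derivation ℝ A A))
    (hKcompat : ∀ (i : ι) (X Y : Derivation ℝ A A), Ω (K i X) Y = Ω X (K i Y))
    (hcomm : ∀ i j : ι, (K i).comp (K j) = (K j).comp (K i))
    (hKE : ∀ i : ι, η (K i E) = 0)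
    (H : A) (Hf : ι → A)
    (hchain : ∀ (i : ι) (X : Derivation ℝ A A), X (Hf i) = (K i X) H) :
    ∀ i j : ι,
      (ham (Hf j)) (Hf i) - Hf i * η (ham (Hf j))
        = Hf j * η (ham (Hf i)) - Hf i * η (ham (Hf j)) := by
  -- Ω is alternating
  have hΩself : ∀ X : Derivation ℝ A A, Ω X X = 0 := by
    intro X
    have h := hskew X X
    have h2 : (2 : ℝ) • Ω X X = 0 := by
      rw [two_smul]
      nth_rewrite 1 [h]
      abel
    rcases smul_eq_zero.mp h2 with h' | h'
    · norm_num at h'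
    · exact h'
  have hηE : η E = 0 := by rw [← hE]; exact hΩself E
  -- η(ham f) = -(E f)  (using η E = 0)
  have hηham : ∀ f : A, η (ham f) = -(E f) := by
    intro f
    rw [← hE, hskew, hham, hηE, mul_zero, sub_zero]
  -- commutativity applied pointwise
  have hcomm' : ∀ (i j : ι) (X : Derivation ℝ A A), K i (K j X) = K j (K i X) := by
    intro i j X
    exact DFunLike.congr_fun (hcomm i j) X
  intro i j
  -- reduce to the key identity
  have key : (ham (Hf j)) (Hf i) = Hf j * η (ham (Hf i)) := by
    -- η(KᵢKⱼE) = 0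
    have hηWE : η (K i (K j E)) = 0 := by
      have h1 : Ω E (K i (K j E)) = - Ω E (K i (K j E)) := by
        calc Ω E (K i (K j E)) = Ω (K i E) (K j E) := (hKcompat i E (K j E)).symm
          _ = Ω (K j (K i E)) E := by rw [hKcompat j (K i E) E]
          _ = - Ω E (K j (K i E)) := hskew _ _
          _ = - Ω E (K i (K j E)) := by rw [hcomm']
      have h2 : (2 : ℝ) • Ω E (K i (K j E)) = 0 := by
        rw [two_smul]; nth_rewrite 1 [h1]; abel
      rcases smul_eq_zero.mp h2 with h' | h'
      · norm_num at h'
      · rw [← hE]; exact h'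
    -- η(Kᵢ ham H) = -(Kᵢ E) H
    have hηKham : η (K i (ham H)) = -((K i E) H) := by
      rw [← hE]
      calc Ω E (K i (ham H)) = Ω (K i E) (ham H) := (hKcompat i E (ham H)).symm
        _ = - Ω (ham H) (K i E) := hskew _ _
        _ = -((K i E) H - H * η (K i E)) := by rw [hham]
        _ = -((K i E) H) := by rw [hKE i, mul_zero, sub_zero]
    -- Ω(ham H, Kᵢ Kⱼ ham H) = 0
    have hΩWham : Ω (ham H) (K i (K j (ham H))) = 0 := by
      have h1 : Ω (ham H) (K i (K j (ham H))) = - Ω (ham H) (K i (K j (ham H))) := by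
        calc Ω (ham H) (K i (K j (ham H)))
            = Ω (K i (ham H)) (K j (ham H)) := (hKcompat i (ham H) (K j (ham H))).symm
          _ = Ω (K j (K i (ham H))) (ham H) := by rw [hKcompat j (K i (ham H)) (ham H)]
          _ = - Ω (ham H) (K j (K i (ham H))) := hskew _ _
          _ = - Ω (ham H) (K i (K j (ham H))) := by rw [hcomm']
      have h2 : (2 : ℝ) • Ω (ham H) (K i (K j (ham H))) = 0 := by
        rw [two_smul]; nth_rewrite 1 [h1]; abel
      rcases smul_eq_zero.mp h2 with h' | h'
      · norm_num at h'
      · exact h'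
    -- (Kᵢ Kⱼ ham H) H = -(H * (Kᵢ Kⱼ E) H)
    have hWhamH : (K i (K j (ham H))) H = -(H * (K i (K j E)) H) := by
      have h1 := hham H (K i (K j (ham H)))
      rw [hΩWham] at h1
      have hηW : η (K i (K j (ham H))) = -((K i (K j E)) H) := by
        rw [← hE]
        calc Ω E (K i (K j (ham H)))
            = Ω (K i E) (K j (ham H)) := (hKcompat i E (K j (ham H))).symm
          _ = Ω (K j (K i E)) (ham H) := by rw [hKcompat j (K i E) (ham H)]
          _ = - Ω (ham H) (K j (K i E)) := hskew _ _
          _ = -((K j (K i E)) H - H * η (K j (K i E))) := by rw [hham]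
          _ = -((K i (K j E)) H) := by
              rw [hcomm' j i E] at *
              rw [hcomm' i j E] at hηWE ⊢
              rw [hηWE, mul_zero, sub_zero]
      have h0 : (0:A) = (K i (K j (ham H))) H - H * η (K i (K j (ham H))) := h1
      rw [hηW] at h0
      linear_combination -h0
    -- η(Kᵢ ham (Hf j)) = -(Kⱼ Kᵢ E) H
    have hηKXj : η (K i (ham (Hf j))) = -((K j (K i E)) H) := by
      rw [← hE]
      calc Ω E (K i (ham (Hf j)))
          = Ω (K i E) (ham (Hf j)) := (hKcompat i E (ham (Hf j))).symm
        _ = - Ω (ham (Hf j)) (K i E) := hskew _ _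
        _ = -((K i E) (Hf j) - Hf j * η (K i E)) := by rw [hham]
        _ = -((K j (K i E)) H) := by rw [hKE i, mul_zero, sub_zero, hchain j (K i E)]
    -- main computation
    have step1 : (ham (Hf j)) (Hf i) = (K i (ham (Hf j))) H := hchain i (ham (Hf j))
    have step2 : (K i (ham (Hf j))) H
        = Ω (ham H) (K i (ham (Hf j))) + H * η (K i (ham (Hf j))) := by
      have := hham H (K i (ham (Hf j)))
      linear_combination -this
    have step3 : Ω (ham H) (K i (ham (Hf j)))
        = H * (K i (K j E)) H - Hf j * (K i E) H := by
      calc Ω (ham H) (K i (ham (Hf j)))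
          = Ω (K i (ham H)) (ham (Hf j)) := (hKcompat i (ham H) (ham (Hf j))).symm
        _ = - Ω (ham (Hf j)) (K i (ham H)) := hskew _ _
        _ = -((K i (ham H)) (Hf j) - Hf j * η (K i (ham H))) := by rw [hham]
        _ = -((K j (K i (ham H))) H - Hf j * -((K i E) H)) := by
            rw [hchain j (K i (ham H)), hηKham]
        _ = -((K i (K j (ham H))) H) - Hf j * (K i E) H := by
            rw [hcomm' j i (ham H)]; ring
        _ = H * (K i (K j E)) H - Hf j * (K i E) H := by rw [hWhamH]; ring
    have hηhami : η (ham (Hf i)) = -((K i E) H) := by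
      rw [hηham, hchain i E]
    rw [step1, step2, step3, hηKXj, hηhami, hcomm' j i E]
    ring
  rw [key]
end
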